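/- arXiv:1809.09449 — 4 statements merged into one kernel-verified Lean document; each statement's English description precedes it below -/
import Mathlib

section
/- The bootstrap step-size is bounded away from zero on the initial sublevel set: inf{ᾱ(x) : x ∈ relint(X), f(x) ≤ f(x⁰)} > 0, where ᾱ(x) = min{α₀(x), 2β/L} and α₀(x) = min{xᵢ θᵢ''(xᵢ)/rᵢ(x) : rᵢ(x) > 0} (min ∅ = +∞). -/
open Matrix Filter Set

namespace HBA

noncomputable section

variable {n m : ℕ}

/-- Feasible set `X = {x | Ax = b, x ≥ 0}`. -/
def Feas (A : Matrix (Fin m) (Fin n) ℝ) (b : Fin m → ℝ) : Set (Fin n → ℝ) :=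
  {x | A *ᵥ x = b ∧ ∀ i, 0 ≤ x i}

/-- Relative interior of the feasible set: `{x | Ax = b, x > 0}`. -/
def RelInt (A : Matrix (Fin m) (Fin n) ℝ) (b : Fin m → ℝ) : Set (Fin n → ℝ) :=
  {x | A *ᵥ x = b ∧ ∀ i, 0 < x i}

/-- Euclidean norm on `Fin n → ℝ`. -/
def euclNorm (x : Fin n → ℝ) : ℝ := Real.sqrt (∑ i, (x i) ^ 2)

/-- The linear functional `h ↦ ∑ i, v i * h i`, as a continuous linear map. -/
def toDualCLM (v : Fin n → ℝ) : (Fin n → ℝ) →L[ℝ] ℝ :=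
  ∑ i, v i • (ContinuousLinearMap.proj i : (Fin n → ℝ) →L[ℝ] ℝ)

/-- Hessian metric `H(x) = diag(θ₁''(x₁),…,θₙ''(xₙ))`, where `D i = θᵢ''`. -/
def Hmat (D : Fin n → ℝ → ℝ) (x : Fin n → ℝ) : Matrix (Fin n) (Fin n) ℝ :=
  Matrix.diagonal fun i => D i (x i)

/-- Inverse Hessian metric `H(x)⁻¹ = diag(1/θᵢ''(xᵢ))`. -/
def Hinv (D : Fin n → ℝ → ℝ) (x : Fin n → ℝ) : Matrix (Fin n) (Fin n) ℝ :=
  Matrix.diagonal fun i => (D i (x i))⁻¹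

/-- Continuous extension of `H(x)⁻¹` to the boundary, setting `1/θᵢ''(xᵢ) := 0` if `xᵢ = 0`. -/
def HinvC (D : Fin n → ℝ → ℝ) (x : Fin n → ℝ) : Matrix (Fin n) (Fin n) ℝ :=
  Matrix.diagonal fun i => if x i = 0 then 0 else (D i (x i))⁻¹

/-- Dual variable `y(x) = (A H(x)⁻¹ Aᵀ)⁻¹ A H(x)⁻¹ ∇f(x)`. -/
def dualY (A : Matrix (Fin m) (Fin n) ℝ) (D : Fin n → ℝ → ℝ)
    (g : (Fin n → ℝ) → Fin n → ℝ) (x : Fin n → ℝ) : Fin m → ℝ :=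
  (A * Hinv D x * Aᵀ)⁻¹ *ᵥ (A *ᵥ (Hinv D x *ᵥ g x))

/-- Continuous boundary extension of the dual variable. -/
def dualYC (A : Matrix (Fin m) (Fin n) ℝ) (D : Fin n → ℝ → ℝ)
    (g : (Fin n → ℝ) → Fin n → ℝ) (x : Fin n → ℝ) : Fin m → ℝ :=
  (A * HinvC D x * Aᵀ)⁻¹ *ᵥ (A *ᵥ (HinvC D x *ᵥ g x))

/-- Reduced cost `r(x) = ∇f(x) − Aᵀ y(x)`. -/
def redCost (A : Matrix (Fin m) (Fin n) ℝ) (D : Fin n → ℝ → ℝ)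
    (g : (Fin n → ℝ) → Fin n → ℝ) (x : Fin n → ℝ) : Fin n → ℝ :=
  g x - Aᵀ *ᵥ dualY A D g x

/-- Continuous boundary extension of the reduced cost. -/
def redCostC (A : Matrix (Fin m) (Fin n) ℝ) (D : Fin n → ℝ → ℝ)
    (g : (Fin n → ℝ) → Fin n → ℝ) (x : Fin n → ℝ) : Fin n → ℝ :=
  g x - Aᵀ *ᵥ dualYC A D g x

/-- Search direction `v(x) = −H(x)⁻¹ r(x)`. -/
def searchDir (A : Matrix (Fin m) (Fin n) ℝ) (D : Fin n → ℝ → ℝ)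
    (g : (Fin n → ℝ) → Fin n → ℝ) (x : Fin n → ℝ) : Fin n → ℝ :=
  -(Hinv D x *ᵥ redCost A D g x)

/-- The squared local norm `‖z‖ₓ² = zᵀ H(x) z`. -/
def xnorm2 (D : Fin n → ℝ → ℝ) (x z : Fin n → ℝ) : ℝ := z ⬝ᵥ (Hmat D x *ᵥ z)

/-- Bootstrap step-size `ᾱ(x) = min{α₀(x), 2β/L}`, where
`α₀(x) = min{xᵢθᵢ''(xᵢ)/rᵢ(x) : rᵢ(x) > 0}` and `min ∅ = +∞`. -/
def alphaBar (A : Matrix (Fin m) (Fin n) ℝ) (D : Fin n → ℝ → ℝ)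
    (g : (Fin n → ℝ) → Fin n → ℝ) (β Lf : ℝ) (x : Fin n → ℝ) : ℝ :=
  sInf (insert (2 * β / Lf)
    {a : ℝ | ∃ i, 0 < redCost A D g x i ∧ a = x i * D i (x i) / redCost A D g x i})

/-- The Armijo sufficient-decrease condition at backtracking exponent `l`:
`f(x + δ^l ᾱ(x) v(x)) − f(x) ≤ −μ δ^l ᾱ(x) ‖v(x)‖ₓ²`. -/
def armijoCond (A : Matrix (Fin m) (Fin n) ℝ) (D : Fin n → ℝ → ℝ)
    (g : (Fin n → ℝ) → Fin n → ℝ) (f : (Fin n → ℝ) → ℝ) (β Lf μ δ : ℝ)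
    (x : Fin n → ℝ) (l : ℕ) : Prop :=
  f (x + (δ ^ l * alphaBar A D g β Lf x) • searchDir A D g x) - f x ≤
    -(μ * (δ ^ l * alphaBar A D g β Lf x) * xnorm2 D x (searchDir A D g x))

/-- The Armijo step-size `α(x) = δ^ℓ ᾱ(x)`, `ℓ` the smallest exponent giving sufficient decrease. -/
def stepSize (A : Matrix (Fin m) (Fin n) ℝ) (D : Fin n → ℝ → ℝ)
    (g : (Fin n → ℝ) → Fin n → ℝ) (f : (Fin n → ℝ) → ℝ) (β Lf μ δ : ℝ)
    (x : Fin n → ℝ) : ℝ :=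
  δ ^ sInf {l : ℕ | armijoCond A D g f β Lf μ δ x l} * alphaBar A D g β Lf x

/-- The iterates of the Hessian barrier algorithm: `x⁰ = x0`, `x^{k+1} = x^k + α(x^k) v(x^k)`. -/
def hba (A : Matrix (Fin m) (Fin n) ℝ) (D : Fin n → ℝ → ℝ)
    (g : (Fin n → ℝ) → Fin n → ℝ) (f : (Fin n → ℝ) → ℝ) (β Lf μ δ : ℝ)
    (x0 : Fin n → ℝ) : ℕ → Fin n → ℝ
  | 0 => x0
  | k + 1 =>
      hba A D g f β Lf μ δ x0 k
        + stepSize A D g f β Lf μ δ (hba A D g f β Lf μ δ x0 k)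
            • searchDir A D g (hba A D g f β Lf μ δ x0 k)

end

end HBA

/-! With weights `d = H(x)⁻¹ > 0`, the dual variable `y(x)` is the weighted least-squares
solution of `Aᵀ y ≈ ∇f(x)`, characterised by `A diag(d) (∇f(x) - Aᵀ y) = 0`. For `A` of full
row rank, `‖y‖ ≤ C ‖∇f(x)‖` with `C` independent of `d`: otherwise, normalising a bad sequence
gives `u` on the unit sphere and residuals `r` tending to `-Aᵀ u`, so that eventually
`∑ dᵢ (Aᵀ u)ᵢ rᵢ < 0`, contradicting `uᵀ A diag(d) r = 0`. As `∇f` is Lipschitz it is bounded on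
the bounded sublevel set, hence so is the reduced cost, say by `R`, and `xᵢ θᵢ''(xᵢ) ≥ ε` gives
`ᾱ(x) ≥ min(2β/L, ε/R)`. -/

open Topology

theorem Matrix.mulVec_injective_of_rank_eq_card {K : Type*} [Field K] {ι κ : Type*}
    [Fintype ι] [Fintype κ] (B : Matrix ι κ K) (h : B.rank = Fintype.card κ) :
    Function.Injective B.mulVec := by
  have hker := LinearMap.finrank_range_add_finrank_ker B.mulVecLin
  rw [← Matrix.rank, h, Module.finrank_fintype_fun_eq_card, add_eq_left,
    Submodule.finrank_eq_zero, LinearMap.ker_eq_bot] at hker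
  exact hker

theorem LipschitzOnWith.isBounded_image {α β : Type*} [PseudoMetricSpace α]
    [PseudoMetricSpace β] {K : NNReal} {f : α → β} {s : Set α} (hf : LipschitzOnWith K f s)
    (hs : Bornology.IsBounded s) : Bornology.IsBounded (f '' s) := by
  obtain ⟨C, hC⟩ := Metric.isBounded_iff.1 hs
  refine Metric.isBounded_iff.2 ⟨K * C, ?_⟩
  rintro _ ⟨x, hx, rfl⟩ _ ⟨y, hy, rfl⟩
  exact (hf.dist_le_mul x hx y hy).trans (by gcongr; exact hC hx hy)

namespace Matrix

variable {ι κ : Type*} [Fintype ι] [Fintype κ] [DecidableEq κ] {A : Matrix ι κ ℝ}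

theorem isUnit_det_mul_diagonal_mul_transpose [DecidableEq ι] (hA : Function.Injective Aᵀ.mulVec)
    {d : κ → ℝ} (hd : ∀ i, 0 < d i) : IsUnit (A * diagonal d * Aᵀ).det := by
  have hpos := (Matrix.PosDef.diagonal hd).conjTranspose_mul_mul_same hA
  rw [conjTranspose_eq_transpose_of_trivial, transpose_transpose] at hpos
  exact (isUnit_iff_isUnit_det _).1 hpos.isUnit

theorem mulVec_diagonal_mulVec_sub_eq_zero [DecidableEq ι] {d : κ → ℝ}
    (hdet : IsUnit (A * diagonal d * Aᵀ).det) (g : κ → ℝ) :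
    A *ᵥ (diagonal d *ᵥ
      (g - Aᵀ *ᵥ ((A * diagonal d * Aᵀ)⁻¹ *ᵥ (A *ᵥ (diagonal d *ᵥ g))))) = 0 := by
  simp only [mulVec_sub, mulVec_mulVec, ← Matrix.mul_assoc]
  rw [mul_nonsing_inv _ hdet, Matrix.one_mul, sub_self]

theorem exists_transpose_mulVec_mul_nonneg {d r : κ → ℝ} (hd : ∀ i, 0 < d i)
    (hr : A *ᵥ (diagonal d *ᵥ r) = 0) {u : ι → ℝ} (hu : Aᵀ *ᵥ u ≠ 0) :
    ∃ i, (Aᵀ *ᵥ u) i ≠ 0 ∧ 0 ≤ (Aᵀ *ᵥ u) i * r i := by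
  by_contra! hneg
  have hsum : ∑ i, d i * ((Aᵀ *ᵥ u) i * r i) = 0 := by
    calc ∑ i, d i * ((Aᵀ *ᵥ u) i * r i) = (Aᵀ *ᵥ u) ⬝ᵥ (diagonal d *ᵥ r) := by
          simp only [dotProduct, mulVec_diagonal]; congr 1; ext i; ring
      _ = 0 := by rw [mulVec_transpose, ← dotProduct_mulVec, hr, dotProduct_zero]
  obtain ⟨j, hj⟩ := Function.ne_iff.1 hu
  have hlt : ∑ i, d i * ((Aᵀ *ᵥ u) i * r i) < ∑ _i : κ, (0 : ℝ) := by
    refine Finset.sum_lt_sum (fun i _ => ?_) ⟨j, Finset.mem_univ j, ?_⟩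
    · by_cases hi : (Aᵀ *ᵥ u) i = 0
      · simp [hi]
      · exact mul_nonpos_of_nonneg_of_nonpos (hd i).le (hneg i hi).le
    · exact mul_neg_of_pos_of_neg (hd j) (hneg j hj)
  simp only [Finset.sum_const_zero] at hlt
  linarith

theorem exists_pos_le_norm_of_mulVec_diagonal_eq_zero (hA : Function.Injective Aᵀ.mulVec) :
    ∃ δ > 0, ∀ (d h : κ → ℝ) (u : ι → ℝ), (∀ i, 0 < d i) → ‖u‖ = 1 →
      A *ᵥ (diagonal d *ᵥ (h - Aᵀ *ᵥ u)) = 0 → δ ≤ ‖h‖ := by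
  by_contra! hsmall
  choose d h u hd hu hnormal hh using fun k : ℕ => hsmall (1 / ((k : ℝ) + 1)) (by positivity)
  obtain ⟨u₀, hu₀, φ, hφ, hlim⟩ :=
    (isCompact_sphere (0 : ι → ℝ) 1).tendsto_subseq fun k => mem_sphere_zero_iff_norm.2 (hu k)
  have hw : Aᵀ *ᵥ u₀ ≠ 0 := by
    rw [← mulVec_zero Aᵀ, hA.ne_iff]
    rintro rfl
    simp at hu₀
  have hh₀ : Tendsto h atTop (𝓝 0) :=
    squeeze_zero_norm (fun k => (hh k).le) tendsto_one_div_add_atTop_nhds_zero_nat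
  have hres : Tendsto (fun t => h (φ t) - Aᵀ *ᵥ u (φ t)) atTop (𝓝 (-(Aᵀ *ᵥ u₀))) := by
    have := (hh₀.comp hφ.tendsto_atTop).sub
      (((continuous_const (y := Aᵀ)).matrix_mulVec continuous_id).tendsto u₀ |>.comp hlim)
    simpa using this
  have hneg : ∀ᶠ t in atTop, ∀ i, (Aᵀ *ᵥ u₀) i ≠ 0 →
      (Aᵀ *ᵥ u₀) i * (h (φ t) - Aᵀ *ᵥ u (φ t)) i < 0 := by
    rw [eventually_all]
    intro i
    by_cases hi : (Aᵀ *ᵥ u₀) i = 0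
    · exact Eventually.of_forall fun _ hi' => absurd hi hi'
    · have hlim_i := ((continuous_apply i).tendsto _ |>.comp hres).const_mul ((Aᵀ *ᵥ u₀) i)
      have hsq : (Aᵀ *ᵥ u₀) i * (-(Aᵀ *ᵥ u₀)) i < 0 := by
        simpa [Pi.neg_apply, mul_neg, neg_neg_iff_pos] using mul_self_pos.2 hi
      exact (hlim_i.eventually_lt_const hsq).mono fun t ht _ => ht
  obtain ⟨t, ht⟩ := hneg.exists
  obtain ⟨i, hi, hnonneg⟩ :=
    exists_transpose_mulVec_mul_nonneg (hd (φ t)) (hnormal (φ t)) hw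
  exact (ht i hi).not_ge hnonneg

theorem exists_norm_le_mul_of_mulVec_diagonal_eq_zero (hA : Function.Injective Aᵀ.mulVec) :
    ∃ C ≥ 0, ∀ (d g : κ → ℝ) (y : ι → ℝ), (∀ i, 0 < d i) →
      A *ᵥ (diagonal d *ᵥ (g - Aᵀ *ᵥ y)) = 0 → ‖y‖ ≤ C * ‖g‖ := by
  obtain ⟨δ, hδ, hbound⟩ := exists_pos_le_norm_of_mulVec_diagonal_eq_zero hA
  refine ⟨δ⁻¹, inv_nonneg.2 hδ.le, fun d g y hd hnormal => ?_⟩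
  rcases eq_or_ne y 0 with rfl | hy
  · simp only [norm_zero]; positivity
  have hscaled := hbound d (‖y‖⁻¹ • g) (‖y‖⁻¹ • y) hd (norm_smul_inv_norm hy) (by
    rw [mulVec_smul, ← smul_sub, mulVec_smul, mulVec_smul, hnormal, smul_zero])
  rw [norm_smul, norm_inv, norm_norm, inv_mul_eq_div, le_div_iff₀ (norm_pos_iff.2 hy)] at hscaled
  rw [inv_mul_eq_div, le_div_iff₀ hδ]
  linarith

end Matrix

namespace HBA

variable {m n : ℕ}

theorem relInt_subset_feas (A : Matrix (Fin m) (Fin n) ℝ) (b : Fin m → ℝ) :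
    RelInt A b ⊆ Feas A b :=
  fun _ hx => ⟨hx.1, fun i => (hx.2 i).le⟩

theorem euclNorm_eq_norm_toLp (v : Fin n → ℝ) :
    euclNorm v = ‖(WithLp.toLp 2 v : EuclideanSpace ℝ (Fin n))‖ := by
  simp [euclNorm, EuclideanSpace.norm_eq]

theorem isBounded_image_of_euclNorm_sub_le {g : (Fin n → ℝ) → Fin n → ℝ} {L : ℝ}
    {S X : Set (Fin n → ℝ)} (hS : Bornology.IsBounded S) (hSX : S ⊆ X)
    (hLip : ∀ x ∈ X, ∀ x' ∈ X, euclNorm (g x - g x') ≤ L * euclNorm (x - x')) :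
    Bornology.IsBounded (g '' S) := by
  have hSL : Bornology.IsBounded (WithLp.toLp 2 '' S : Set (EuclideanSpace ℝ (Fin n))) :=
    (PiLp.lipschitzWith_toLp 2 _).isBounded_image hS
  have hgL : LipschitzOnWith L.toNNReal
      (fun v : EuclideanSpace ℝ (Fin n) => (WithLp.toLp 2 (g v.ofLp) : EuclideanSpace ℝ (Fin n)))
      (WithLp.toLp 2 '' S) := by
    refine LipschitzOnWith.of_dist_le_mul ?_
    rintro _ ⟨x, hx, rfl⟩ _ ⟨x', hx', rfl⟩
    simp only [dist_eq_norm, ← WithLp.toLp_sub, ← euclNorm_eq_norm_toLp]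
    exact (hLip x (hSX hx) x' (hSX hx')).trans
      (mul_le_mul_of_nonneg_right (Real.le_coe_toNNReal L) (Real.sqrt_nonneg _))
  simpa [Set.image_image] using
    (PiLp.lipschitzWith_ofLp 2 _).isBounded_image (hgL.isBounded_image hSL)

theorem mulVec_Hinv_redCost_eq_zero {A : Matrix (Fin m) (Fin n) ℝ}
    (hA : Function.Injective Aᵀ.mulVec) {D : Fin n → ℝ → ℝ} (g : (Fin n → ℝ) → Fin n → ℝ) {x : Fin n → ℝ}
    (hD : ∀ i, 0 < D i (x i)) :
    A *ᵥ (Hinv D x *ᵥ redCost A D g x) = 0 :=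
  mulVec_diagonal_mulVec_sub_eq_zero
    (isUnit_det_mul_diagonal_mul_transpose hA fun i => inv_pos.2 (hD i)) (g x)

theorem exists_norm_redCost_le {A : Matrix (Fin m) (Fin n) ℝ}
    (hA : Function.Injective Aᵀ.mulVec) {D : Fin n → ℝ → ℝ} (g : (Fin n → ℝ) → Fin n → ℝ) {S : Set (Fin n → ℝ)}
    (hD : ∀ x ∈ S, ∀ i, 0 < D i (x i)) (hg : Bornology.IsBounded (g '' S)) :
    ∃ R, ∀ x ∈ S, ‖redCost A D g x‖ ≤ R := by
  obtain ⟨C, hC, hy⟩ := exists_norm_le_mul_of_mulVec_diagonal_eq_zero hA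
  obtain ⟨G, hG⟩ := isBounded_iff_forall_norm_le.1 hg
  let T := LinearMap.toContinuousLinearMap (Matrix.toLin' Aᵀ)
  refine ⟨G + ‖T‖ * (C * G), fun x hx => ?_⟩
  have hgx : ‖g x‖ ≤ G := hG _ ⟨x, hx, rfl⟩
  have hdual : ‖dualY A D g x‖ ≤ C * G :=
    (hy _ _ _ (fun i => inv_pos.2 (hD x hx i)) (mulVec_Hinv_redCost_eq_zero hA g (hD x hx))).trans
      (mul_le_mul_of_nonneg_left hgx hC)
  calc ‖redCost A D g x‖ ≤ ‖g x‖ + ‖T (dualY A D g x)‖ := norm_sub_le _ _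
    _ ≤ G + ‖T‖ * (C * G) := add_le_add hgx ((T.le_opNorm _).trans (by gcongr))

theorem le_alphaBar (A : Matrix (Fin m) (Fin n) ℝ) (D : Fin n → ℝ → ℝ)
    (g : (Fin n → ℝ) → Fin n → ℝ) (β Lf : ℝ) {x : Fin n → ℝ} {ε R : ℝ} (hε : 0 ≤ ε)
    (hxD : ∀ i, ε ≤ x i * D i (x i)) (hR : ∀ i, redCost A D g x i ≤ R) :
    min (2 * β / Lf) (ε / R) ≤ alphaBar A D g β Lf x := by
  refine le_csInf ⟨_, Set.mem_insert _ _⟩ ?_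
  rintro a (rfl | ⟨i, hri, rfl⟩)
  · exact min_le_left _ _
  · calc min (2 * β / Lf) (ε / R) ≤ ε / redCost A D g x i :=
          (min_le_right _ _).trans (div_le_div_of_nonneg_left hε hri (hR i))
      _ ≤ x i * D i (x i) / redCost A D g x i := div_le_div_of_nonneg_right (hxD i) hri.le

end HBA

open Matrix Filter Set in
theorem stmt4_general
    {n m : ℕ}
    (A : Matrix (Fin m) (Fin n) ℝ) (b : Fin m → ℝ)
    (hrank : A.rank = m)
    (f : (Fin n → ℝ) → ℝ) (g : (Fin n → ℝ) → Fin n → ℝ)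
    (Lf : ℝ) (hLf : 0 < Lf)
    (hLip : ∀ x ∈ HBA.Feas A b, ∀ x' ∈ HBA.Feas A b,
      HBA.euclNorm (g x - g x') ≤ Lf * HBA.euclNorm (x - x'))
    (x0 : Fin n → ℝ)
    (hbdd : Bornology.IsBounded {x | x ∈ HBA.Feas A b ∧ f x ≤ f x0})
    (D : Fin n → ℝ → ℝ)
    (hDpos : ∀ i, ∀ t ∈ Set.Ioi (0:ℝ), 0 < D i t)
    (β : ℝ) (hβ : 0 < β)
    (ε : ℝ) (hε : 0 < ε) (hDε : ∀ i, ∀ t ∈ Set.Ioi (0:ℝ), ε ≤ t * D i t)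
    :
    ∃ c > (0:ℝ), ∀ x, x ∈ HBA.RelInt A b → f x ≤ f x0 →
      c ≤ HBA.alphaBar A D g β Lf x := by
  have hA : Function.Injective Aᵀ.mulVec :=
    Aᵀ.mulVec_injective_of_rank_eq_card (by rw [rank_transpose, hrank, Fintype.card_fin])
  set S := {x | x ∈ HBA.RelInt A b ∧ f x ≤ f x0}
  have hSX : S ⊆ HBA.Feas A b := fun x hx => HBA.relInt_subset_feas A b hx.1
  have hS : Bornology.IsBounded S := hbdd.subset fun x hx => ⟨hSX hx, hx.2⟩
  obtain ⟨R, hR⟩ := HBA.exists_norm_redCost_le hA g (fun x hx i => hDpos i _ (hx.1.2 i))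
    (HBA.isBounded_image_of_euclNorm_sub_le hS hSX hLip)
  refine ⟨min (2 * β / Lf) (ε / max R 1), by positivity, fun x hx hfx =>
    HBA.le_alphaBar A D g β Lf hε.le (fun i => hDε i _ (hx.2 i)) fun i => ?_⟩
  calc HBA.redCost A D g x i ≤ ‖HBA.redCost A D g x‖ :=
        (Real.le_norm_self _).trans (norm_le_pi_norm _ i)
    _ ≤ max R 1 := (hR x ⟨hx, hfx⟩).trans (le_max_left _ _)

open Matrix Filter Set in
theorem stmt4
    {n m : ℕ}
    (A : Matrix (Fin m) (Fin n) ℝ) (b : Fin m → ℝ)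
    (hrank : A.rank = m)
    (f : (Fin n → ℝ) → ℝ) (g : (Fin n → ℝ) → Fin n → ℝ)
    (hgrad : ∀ x ∈ HBA.Feas A b, HasFDerivAt f (HBA.toDualCLM (g x)) x)
    (Lf : ℝ) (hLf : 0 < Lf)
    (hLip : ∀ x ∈ HBA.Feas A b, ∀ x' ∈ HBA.Feas A b,
      HBA.euclNorm (g x - g x') ≤ Lf * HBA.euclNorm (x - x'))
    (x0 : Fin n → ℝ) (hx0 : x0 ∈ HBA.RelInt A b)
    (hbdd : Bornology.IsBounded {x | x ∈ HBA.Feas A b ∧ f x ≤ f x0})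
    (θ θd D : Fin n → ℝ → ℝ)
    (hθ1 : ∀ i, ∀ t ∈ Set.Ioi (0:ℝ), HasDerivAt (θ i) (θd i t) t)
    (hθ2 : ∀ i, ∀ t ∈ Set.Ioi (0:ℝ), HasDerivAt (θd i) (D i t) t)
    (hDpos : ∀ i, ∀ t ∈ Set.Ioi (0:ℝ), 0 < D i t)
    (hDlip : ∀ i, ∀ t ∈ Set.Ioi (0:ℝ), ∃ r > (0:ℝ), ∃ K : NNReal,
      LipschitzOnWith K (D i) (Set.Ioo (t - r) (t + r) ∩ Set.Ioi 0))
    (hsteep : ∀ i, Filter.Tendsto (θd i) (nhdsWithin (0:ℝ) (Set.Ioi 0)) Filter.atBot)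
    (β : ℝ) (hβ : 0 < β) (hDβ : ∀ i, ∀ t ∈ Set.Ioi (0:ℝ), β ≤ D i t)
    (ε : ℝ) (hε : 0 < ε) (hDε : ∀ i, ∀ t ∈ Set.Ioi (0:ℝ), ε ≤ t * D i t)
    :
    ∃ c > (0:ℝ), ∀ x, x ∈ HBA.RelInt A b → f x ≤ f x0 →
      c ≤ HBA.alphaBar A D g β Lf x :=
  stmt4_general A b hrank f g Lf hLf hLip x0 hbdd D hDpos β hβ ε hε hDε
end

section
/- (Armijo backtracking terminates.) Let x ∈ relint(X) with v(x) ≠ 0, let ᾱ(x) = min{α₀(x), 2β/L}, and fix μ ∈ (0,1), δ ∈ (0,1). Then there exists a nonnegative integer ℓ such that f(x + δ^ℓ ᾱ(x) v(x)) − f(x) ≤ −μ δ^ℓ ᾱ(x) ‖v(x)‖ₓ²; that is, the Armijo backtracking procedure at x terminates after finitely many shrinkage steps. -/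
open Matrix Filter Set

/-!
Since `A` has full row rank, `A H(x)⁻¹ Aᵀ` is invertible and `v(x)` lies in `ker A`, so
`∇f(x) ⬝ v(x) = r(x) ⬝ v(x) = -‖v(x)‖ₓ² < 0`. The derivative of `t ↦ f(x + t v(x))` at `0` is
therefore strictly below the Armijo slope `-μ ‖v(x)‖ₓ²`, so sufficient decrease holds for all
small `t > 0`, in particular for `t = δ^ℓ ᾱ(x)` with `ℓ` large, as `ᾱ(x) > 0`.
-/

open Topology

theorem eventually_sub_le_mul_of_hasDerivAt {φ : ℝ → ℝ} {φ' s a : ℝ} (hφ : HasDerivAt φ φ' a)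
    (hs : φ' < s) : ∀ᶠ t in 𝓝[>] a, φ t - φ a ≤ s * (t - a) := by
  have hslope : Tendsto (slope φ a) (𝓝[>] a) (𝓝 φ') :=
    (hasDerivAt_iff_tendsto_slope.mp hφ).mono_left (nhdsWithin_mono a fun _ ht => ne_of_gt ht)
  filter_upwards [hslope.eventually (eventually_le_nhds hs), self_mem_nhdsWithin] with t ht hta
  rw [slope_def_field, div_le_iff₀ (sub_pos.mpr hta)] at ht
  exact ht

theorem exists_pow_mul_of_eventually_nhdsGT_zero {P : ℝ → Prop} (hP : ∀ᶠ t in 𝓝[>] 0, P t)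
    {δ c : ℝ} (hδ₀ : 0 < δ) (hδ₁ : δ < 1) (hc : 0 < c) : ∃ l : ℕ, P (δ ^ l * c) := by
  have hlim : Tendsto (fun l : ℕ => δ ^ l * c) atTop (𝓝[>] 0) := by
    refine tendsto_nhdsWithin_of_tendsto_nhds_of_eventually_within _ ?_
      (Eventually.of_forall fun l => mul_pos (pow_pos hδ₀ l) hc)
    simpa using (tendsto_pow_atTop_nhds_zero_of_lt_one hδ₀.le hδ₁).mul_const c
  exact (hlim.eventually hP).exists

theorem Matrix.vecMul_injective_of_rank_eq_card {K ι κ : Type*} [Field K] [Fintype ι]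
    [Fintype κ] {A : Matrix ι κ K} (hrank : A.rank = Fintype.card ι) :
    Function.Injective A.vecMul := by
  rw [vecMul_injective_iff, linearIndependent_iff_card_eq_finrank_span, Set.finrank,
    ← rank_eq_finrank_span_row, hrank]

namespace HBA

variable {n m : ℕ} {A : Matrix (Fin m) (Fin n) ℝ} {D : Fin n → ℝ → ℝ}
  {g : (Fin n → ℝ) → Fin n → ℝ} {x : Fin n → ℝ}

theorem toDualCLM_apply (v h : Fin n → ℝ) : toDualCLM v h = v ⬝ᵥ h := by
  simp [toDualCLM, dotProduct]

theorem mulVec_searchDir_eq_zero (hrank : A.rank = m) (hD : ∀ i, 0 < D i (x i)) :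
    A *ᵥ searchDir A D g x = 0 := by
  have hM : IsUnit (A * Hinv D x * Aᵀ) := by
    refine PosDef.isUnit <|
      (posDef_diagonal_iff.mpr fun i => inv_pos.mpr (hD i)).mul_mul_conjTranspose_same
        (vecMul_injective_of_rank_eq_card ?_)
    rw [hrank, Fintype.card_fin]
  have hproj : A * Hinv D x * Aᵀ * (A * Hinv D x * Aᵀ)⁻¹ * A * Hinv D x = A * Hinv D x := by
    rw [mul_nonsing_inv _ ((isUnit_iff_isUnit_det _).mp hM), Matrix.one_mul]
  simp only [searchDir, redCost, dualY, mulVec_neg, mulVec_sub, mulVec_mulVec, ← Matrix.mul_assoc,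
    hproj, sub_self, neg_zero]

theorem mul_searchDir_apply (hD : ∀ i, 0 < D i (x i)) (i : Fin n) :
    D i (x i) * searchDir A D g x i = -redCost A D g x i := by
  simp [searchDir, Hinv, mulVec_diagonal, (hD i).ne']

theorem xnorm2_searchDir (hD : ∀ i, 0 < D i (x i)) :
    xnorm2 D x (searchDir A D g x) = -(redCost A D g x ⬝ᵥ searchDir A D g x) := by
  simp only [xnorm2, Hmat, mulVec_diagonal, dotProduct, ← Finset.sum_neg_distrib]
  refine Finset.sum_congr rfl fun i _ => ?_
  rw [mul_searchDir_apply hD]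
  ring

theorem dotProduct_searchDir (hrank : A.rank = m) (hD : ∀ i, 0 < D i (x i)) :
    g x ⬝ᵥ searchDir A D g x = -xnorm2 D x (searchDir A D g x) := by
  have hg : g x = redCost A D g x + Aᵀ *ᵥ dualY A D g x := (sub_add_cancel _ _).symm
  rw [xnorm2_searchDir hD, neg_neg, hg, add_dotProduct, mulVec_transpose,
    ← dotProduct_mulVec, mulVec_searchDir_eq_zero hrank hD, dotProduct_zero, add_zero]

theorem xnorm2_pos (hD : ∀ i, 0 < D i (x i)) {z : Fin n → ℝ} (hz : z ≠ 0) :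
    0 < xnorm2 D x z := by
  obtain ⟨j, hj⟩ := Function.ne_iff.mp hz
  simp only [xnorm2, Hmat, mulVec_diagonal, dotProduct]
  refine Finset.sum_pos' (fun i _ => ?_) ⟨j, Finset.mem_univ j, ?_⟩
  · nlinarith [mul_self_nonneg (z i), hD i]
  · nlinarith [mul_self_pos.mpr hj, hD j]

theorem alphaBar_pos (hx : ∀ i, 0 < x i) (hD : ∀ i, 0 < D i (x i)) {β Lf : ℝ} (hβ : 0 < β)
    (hLf : 0 < Lf) : 0 < alphaBar A D g β Lf x := by
  set S := {a : ℝ | ∃ i, 0 < redCost A D g x i ∧ a = x i * D i (x i) / redCost A D g x i}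
  have hS : S.Finite := (finite_range fun i => x i * D i (x i) / redCost A D g x i).subset
    fun a ⟨i, _, ha⟩ => ⟨i, ha.symm⟩
  rcases (insert_nonempty _ S).csInf_mem (hS.insert _) with h | ⟨i, hi, h⟩
  · rw [alphaBar, h]; positivity
  · rw [alphaBar, h]; exact div_pos (mul_pos (hx i) (hD i)) hi

theorem hasDerivAt_comp_add_smul_searchDir {f : (Fin n → ℝ) → ℝ}
    (hf : HasFDerivAt f (toDualCLM (g x)) x) (hrank : A.rank = m) (hD : ∀ i, 0 < D i (x i)) :
    HasDerivAt (fun t : ℝ => f (x + t • searchDir A D g x))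
      (-xnorm2 D x (searchDir A D g x)) 0 := by
  have hline : HasDerivAt (fun t : ℝ => x + t • searchDir A D g x) (searchDir A D g x) 0 := by
    simpa using ((hasDerivAt_id (0 : ℝ)).smul_const (searchDir A D g x)).const_add x
  have hf' : HasFDerivAt f (toDualCLM (g x)) (x + (0 : ℝ) • searchDir A D g x) := by
    simpa using hf
  have h := hf'.comp_hasDerivAt (0 : ℝ) hline
  rwa [toDualCLM_apply, dotProduct_searchDir hrank hD] at h

end HBA

open Matrix Filter Set in
theorem stmt5_general
    {n m : ℕ}
    (A : Matrix (Fin m) (Fin n) ℝ) (b : Fin m → ℝ)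
    (hrank : A.rank = m)
    (f : (Fin n → ℝ) → ℝ) (g : (Fin n → ℝ) → Fin n → ℝ)
    (hgrad : ∀ x ∈ HBA.Feas A b, HasFDerivAt f (HBA.toDualCLM (g x)) x)
    (Lf : ℝ) (hLf : 0 < Lf)
    (D : Fin n → ℝ → ℝ)
    (hDpos : ∀ i, ∀ t ∈ Set.Ioi (0:ℝ), 0 < D i t)
    (β : ℝ) (hβ : 0 < β)
    (μ δ : ℝ) (hμ : μ ∈ Set.Ioo (0:ℝ) 1) (hδ : δ ∈ Set.Ioo (0:ℝ) 1)
    (x : Fin n → ℝ) (hx : x ∈ HBA.RelInt A b) (hvx : HBA.searchDir A D g x ≠ 0) :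
    ∃ l : ℕ, HBA.armijoCond A D g f β Lf μ δ x l := by
  obtain ⟨hAx, hxpos⟩ := hx
  have hD : ∀ i, 0 < D i (x i) := fun i => hDpos i (x i) (hxpos i)
  have hN : 0 < HBA.xnorm2 D x (HBA.searchDir A D g x) := HBA.xnorm2_pos hD hvx
  have hline := HBA.hasDerivAt_comp_add_smul_searchDir (hgrad x ⟨hAx, fun i => (hxpos i).le⟩)
    hrank hD
  have hdecrease := eventually_sub_le_mul_of_hasDerivAt hline
    (neg_lt_neg (mul_lt_of_lt_one_left hN hμ.2) : _ < -(μ * _))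
  obtain ⟨l, hl⟩ := exists_pow_mul_of_eventually_nhdsGT_zero hdecrease hδ.1 hδ.2
    (HBA.alphaBar_pos hxpos hD hβ hLf)
  refine ⟨l, ?_⟩
  simp only [HBA.armijoCond, zero_smul, add_zero, sub_zero] at hl ⊢
  linarith

open Matrix Filter Set in
theorem stmt5
    {n m : ℕ}
    (A : Matrix (Fin m) (Fin n) ℝ) (b : Fin m → ℝ)
    (hrank : A.rank = m)
    (f : (Fin n → ℝ) → ℝ) (g : (Fin n → ℝ) → Fin n → ℝ)
    (hgrad : ∀ x ∈ HBA.Feas A b, HasFDerivAt f (HBA.toDualCLM (g x)) x)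
    (Lf : ℝ) (hLf : 0 < Lf)
    (hLip : ∀ x ∈ HBA.Feas A b, ∀ x' ∈ HBA.Feas A b,
      HBA.euclNorm (g x - g x') ≤ Lf * HBA.euclNorm (x - x'))
    (x0 : Fin n → ℝ) (hx0 : x0 ∈ HBA.RelInt A b)
    (hbdd : Bornology.IsBounded {x | x ∈ HBA.Feas A b ∧ f x ≤ f x0})
    (θ θd D : Fin n → ℝ → ℝ)
    (hθ1 : ∀ i, ∀ t ∈ Set.Ioi (0:ℝ), HasDerivAt (θ i) (θd i t) t)
    (hθ2 : ∀ i, ∀ t ∈ Set.Ioi (0:ℝ), HasDerivAt (θd i) (D i t) t)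
    (hDpos : ∀ i, ∀ t ∈ Set.Ioi (0:ℝ), 0 < D i t)
    (hDlip : ∀ i, ∀ t ∈ Set.Ioi (0:ℝ), ∃ r > (0:ℝ), ∃ K : NNReal,
      LipschitzOnWith K (D i) (Set.Ioo (t - r) (t + r) ∩ Set.Ioi 0))
    (hsteep : ∀ i, Filter.Tendsto (θd i) (nhdsWithin (0:ℝ) (Set.Ioi 0)) Filter.atBot)
    (β : ℝ) (hβ : 0 < β) (hDβ : ∀ i, ∀ t ∈ Set.Ioi (0:ℝ), β ≤ D i t)
    (ε : ℝ) (hε : 0 < ε) (hDε : ∀ i, ∀ t ∈ Set.Ioi (0:ℝ), ε ≤ t * D i t)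
    (μ δ : ℝ) (hμ : μ ∈ Set.Ioo (0:ℝ) 1) (hδ : δ ∈ Set.Ioo (0:ℝ) 1)
    (x : Fin n → ℝ) (hx : x ∈ HBA.RelInt A b) (hvx : HBA.searchDir A D g x ≠ 0) :
    ∃ l : ℕ, HBA.armijoCond A D g f β Lf μ δ x l :=
  stmt5_general A b hrank f g hgrad Lf hLf D hDpos β hβ μ δ hμ hδ x hx hvx
end

section
/- (Constancy of a quadratic on the auxiliary polyhedron.) Let Q ∈ ℝ^{n×n} be symmetric, c ∈ ℝⁿ, A ∈ ℝ^{m×n}, b ∈ ℝ^m, and set f(x) = ½ xᵀQx + cᵀx. Fix J ⊆ {1,…,n} and let P_J = {(p,z) ∈ ℝⁿ×ℝ^m : pⱼ = 0 for all j ∈ J; qⱼᵀp − aⱼᵀz = −cⱼ for all j ∉ J; p ≥ 0; Ap = b}, where qⱼ denotes the j-th row of Q and aⱼ the j-th column of A. Then f(p) = f(p') for all (p,z), (p',z') ∈ P_J; i.e., f is constant on the p-component of P_J. -/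
open Matrix Filter Set

open Matrix Filter Set in
theorem stmt18
    {n m : ℕ} (Q : Matrix (Fin n) (Fin n) ℝ) (hQ : Q.IsSymm) (c : Fin n → ℝ)
    (A : Matrix (Fin m) (Fin n) ℝ) (b : Fin m → ℝ) (J : Set (Fin n))
    (f : (Fin n → ℝ) → ℝ) (hf : ∀ x, f x = (1/2) * (x ⬝ᵥ Q *ᵥ x) + c ⬝ᵥ x)
    (P : Set ((Fin n → ℝ) × (Fin m → ℝ)))
    (hP : P = {pz | (∀ j ∈ J, pz.1 j = 0) ∧
      (∀ j ∉ J, Q j ⬝ᵥ pz.1 - Aᵀ j ⬝ᵥ pz.2 = -(c j)) ∧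
      (∀ j, 0 ≤ pz.1 j) ∧ A *ᵥ pz.1 = b}) :
    ∀ pz ∈ P, ∀ pz' ∈ P, f pz.1 = f pz'.1 := by
  subst hP
  rintro ⟨p, z⟩ ⟨h1, h2, h3, h4⟩ ⟨p', z'⟩ ⟨h1', h2', h3', h4'⟩
  simp only [hf]
  set d : Fin n → ℝ := p' - p with hd
  have hAd : A *ᵥ d = 0 := by
    simp [hd, Matrix.mulVec_sub, h4, h4']
  have hdJ : ∀ j ∈ J, d j = 0 := by
    intro j hj
    have a : p j = 0 := h1 j hj
    have a' : p' j = 0 := h1' j hj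
    simp [hd, a, a']
  have key : ∀ (q : Fin n → ℝ) (y : Fin m → ℝ),
      (∀ j ∉ J, Q j ⬝ᵥ q - Aᵀ j ⬝ᵥ y = -(c j)) →
      d ⬝ᵥ (Q *ᵥ q) + c ⬝ᵥ d = 0 := by
    intro q y hqy
    have e1 : d ⬝ᵥ (Q *ᵥ q) + c ⬝ᵥ d = ∑ j, d j * ((Q *ᵥ q) j + c j) := by
      simp only [dotProduct, Finset.mul_sum, ← Finset.sum_add_distrib]
      refine Finset.sum_congr rfl fun j _ => by ring
    have e2 : ∀ j, d j * ((Q *ᵥ q) j + c j) = d j * (Aᵀ *ᵥ y) j := by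
      intro j
      by_cases hj : j ∈ J
      · simp [hdJ j hj]
      · have := hqy j hj
        have hq : (Q *ᵥ q) j + c j = (Aᵀ *ᵥ y) j := by
          simp only [Matrix.mulVec] at this ⊢
          linarith
        rw [hq]
    rw [e1]
    simp only [e2]
    have : ∑ j, d j * (Aᵀ *ᵥ y) j = d ⬝ᵥ (Aᵀ *ᵥ y) := rfl
    rw [this, Matrix.dotProduct_mulVec, Matrix.vecMul_transpose, hAd,
      zero_dotProduct]
  have k1 := key p z h2
  have k2 := key p' z' h2'
  have sym : ∀ u v : Fin n → ℝ, u ⬝ᵥ (Q *ᵥ v) = v ⬝ᵥ (Q *ᵥ u) := by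
    intro u v
    rw [Matrix.dotProduct_mulVec, ← Matrix.mulVec_transpose, hQ.eq,
      dotProduct_comm]
  have hp' : p' = p + d := by simp [hd]
  have expand : p' ⬝ᵥ (Q *ᵥ p') = p ⬝ᵥ (Q *ᵥ p) + d ⬝ᵥ (Q *ᵥ p) + d ⬝ᵥ (Q *ᵥ p') := by
    nth_rewrite 1 [hp']
    rw [add_dotProduct, hp', Matrix.mulVec_add, dotProduct_add,
      sym p d]
    try ring
  have hc : c ⬝ᵥ p' = c ⬝ᵥ p + c ⬝ᵥ d := by
    rw [hp', dotProduct_add]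
  rw [expand, hc]
  linarith
end

section
/- (Sublinear decay from the recursive inequality.) Let ω̄ ≥ 1, κ > 0, set ρ = 1/(2ω̄ − 1) ∈ (0,1], and let (d_k)_{k≥0} be a sequence of nonnegative real numbers satisfying d_{k+1} ≤ d_k − (d_k/κ)^{2ω̄} for all k ≥ k̄, for some k̄ ∈ ℕ. Then there exist a constant C > 0 and an index K ≥ k̄ such that d_k ≤ C k^{−ρ} for all k ≥ K; in particular d_k = O(k^{−ρ}). -/
open Matrix Filter Set

open Matrix Filter Set in
theorem stmt19
    (ωb κ : ℝ) (hω : 1 ≤ ωb) (hκ : 0 < κ)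
    (ρ : ℝ) (hρ : ρ = 1 / (2 * ωb - 1))
    (d : ℕ → ℝ) (hd : ∀ k, 0 ≤ d k) (kbar : ℕ)
    (hrec : ∀ k ≥ kbar, d (k + 1) ≤ d k - (d k / κ) ^ (2 * ωb)) :
    ∃ C > (0:ℝ), ∃ K : ℕ, kbar ≤ K ∧ ∀ k ≥ K, d k ≤ C * (k : ℝ) ^ (-ρ) := by
  have hp2 : (2:ℝ) ≤ 2 * ωb := by linarith
  have hq1 : (1:ℝ) ≤ 2 * ωb - 1 := by linarith
  set q : ℝ := 2 * ωb - 1 with hqdef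
  have hq0 : 0 < q := by linarith
  have hρq : ρ = 1 / q := hρ
  have hρ0 : 0 < ρ := by rw [hρq]; positivity
  by_cases hpos : ∀ k ≥ kbar, 0 < d k
  · -- main case: all positive
    set c : ℝ := q / κ ^ (2 * ωb) with hcdef
    have hκp : 0 < κ ^ (2 * ωb) := Real.rpow_pos_of_pos hκ _
    have hc : 0 < c := by positivity
    have key : ∀ k ≥ kbar, (d k) ^ (-q) + c ≤ (d (k + 1)) ^ (-q) := by
      intro k hk
      have hdk : 0 < d k := hpos k hk
      have hdk1 : 0 < d (k + 1) := hpos (k + 1) (le_trans hk (Nat.le_succ k))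
      set x : ℝ := (d k) ^ q / κ ^ (2 * ωb) with hxdef
      have hx0 : 0 ≤ x := by positivity
      have hstep : d (k + 1) ≤ d k * (1 - x) := by
        have h1 : (d k / κ) ^ (2 * ωb) = d k * x := by
          rw [Real.div_rpow hdk.le hκ.le, hxdef]
          rw [show (2:ℝ) * ωb = 1 + q by ring, Real.rpow_add hdk, Real.rpow_one]
          ring
        have := hrec k hk
        rw [h1] at this
        linarith
      have h1x : 0 < 1 - x := by
        have h := lt_of_lt_of_le hdk1 hstep
        nlinarith
      have hinv : 1 + x ≤ (1 - x)⁻¹ := by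
        rw [← one_div, le_div_iff₀ h1x]; nlinarith
      have hbern : 1 + q * x ≤ (1 + x) ^ q :=
        one_add_mul_self_le_rpow_one_add (by linarith) hq1
      have hchain : (1 + q * x) ≤ ((1 - x)⁻¹) ^ q :=
        le_trans hbern (Real.rpow_le_rpow (by linarith) hinv hq0.le)
      have hA : (d k * (1 - x)) ^ (-q) ≤ (d (k + 1)) ^ (-q) :=
        Real.rpow_le_rpow_of_nonpos hdk1 hstep (by linarith)
      have hB : (d k * (1 - x)) ^ (-q) = (d k) ^ (-q) * ((1 - x)⁻¹) ^ q := by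
        rw [Real.mul_rpow hdk.le h1x.le, Real.rpow_neg h1x.le, ← Real.inv_rpow h1x.le]
      have hC : (d k) ^ (-q) * (1 + q * x) ≤ (d k) ^ (-q) * ((1 - x)⁻¹) ^ q :=
        mul_le_mul_of_nonneg_left hchain (Real.rpow_nonneg hdk.le _)
      have hD : (d k) ^ (-q) * (1 + q * x) = (d k) ^ (-q) + c := by
        have hxx : (d k) ^ (-q) * x = (κ ^ (2 * ωb))⁻¹ := by
          rw [hxdef, div_eq_mul_inv, ← mul_assoc, ← Real.rpow_add hdk]
          simp
        have : (d k) ^ (-q) * (1 + q * x) = (d k) ^ (-q) + q * ((d k) ^ (-q) * x) := by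
          ring
        rw [this, hxx, hcdef, div_eq_mul_inv]
      calc (d k) ^ (-q) + c = (d k) ^ (-q) * (1 + q * x) := hD.symm
        _ ≤ (d k) ^ (-q) * ((1 - x)⁻¹) ^ q := hC
        _ = (d k * (1 - x)) ^ (-q) := hB.symm
        _ ≤ (d (k + 1)) ^ (-q) := hA
    have grow : ∀ j : ℕ, (d kbar) ^ (-q) + j * c ≤ (d (kbar + j)) ^ (-q) := by
      intro j
      induction j with
      | zero => simp
      | succ j ih =>
        have h := key (kbar + j) (Nat.le_add_right _ _)
        push_cast
        calc (d kbar) ^ (-q) + (j + 1) * c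
            = ((d kbar) ^ (-q) + j * c) + c := by ring
          _ ≤ (d (kbar + j)) ^ (-q) + c := by linarith
          _ ≤ (d (kbar + j + 1)) ^ (-q) := h
    refine ⟨(c / 2) ^ (-ρ), Real.rpow_pos_of_pos (by linarith) _, 2 * kbar + 2,
      by omega, ?_⟩
    intro k hk
    have hkk : kbar ≤ k := by omega
    have hlower : c / 2 * (k : ℝ) ≤ (d k) ^ (-q) := by
      have h := grow (k - kbar)
      rw [Nat.add_sub_cancel' hkk] at h
      have hcast : ((k - kbar : ℕ) : ℝ) = (k : ℝ) - kbar := by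
        push_cast [Nat.cast_sub hkk]; ring
      rw [hcast] at h
      have hub : 0 ≤ (d kbar) ^ (-q) := Real.rpow_nonneg (hd _) _
      have hhalf : c / 2 * (k : ℝ) ≤ ((k : ℝ) - kbar) * c := by
        have hk2 : 2 * (kbar : ℝ) ≤ (k : ℝ) := by exact_mod_cast Nat.le_of_lt (by omega)
        nlinarith
      linarith
    have hkpos : (0:ℝ) < c / 2 * (k : ℝ) := by
      have : (0:ℝ) < (k : ℝ) := by exact_mod_cast (show 0 < k by omega)
      positivity
    have hanti : ((d k) ^ (-q)) ^ (-ρ) ≤ (c / 2 * (k : ℝ)) ^ (-ρ) :=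
      Real.rpow_le_rpow_of_nonpos hkpos hlower (by linarith)
    have hid : ((d k) ^ (-q)) ^ (-ρ) = d k := by
      rw [← Real.rpow_mul (hd k), show (-q) * (-ρ) = q * ρ by ring, hρq,
        mul_one_div, div_self (ne_of_gt hq0), Real.rpow_one]
    have hsplit : (c / 2 * (k : ℝ)) ^ (-ρ) = (c / 2) ^ (-ρ) * (k : ℝ) ^ (-ρ) :=
      Real.mul_rpow (by linarith) (Nat.cast_nonneg k)
    rw [← hid, ← hsplit]; exact hanti
  · -- degenerate case: d hits zero and stays zero
    push_neg at hpos
    obtain ⟨K0, hK0ge, hK0le⟩ := hpos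
    have hK0 : d K0 = 0 := le_antisymm hK0le (hd K0)
    have hzero : ∀ j : ℕ, d (K0 + j) = 0 := by
      intro j
      induction j with
      | zero => exact hK0
      | succ j ih =>
        have h := hrec (K0 + j) (Nat.le_add_right _ _ |>.trans' hK0ge)
        rw [ih] at h
        have hz : ((0:ℝ) / κ) ^ (2 * ωb) = 0 := by
          rw [zero_div, Real.zero_rpow (by linarith)]
        rw [hz] at h
        have h2 : d (K0 + (j + 1)) ≤ 0 := by simpa [Nat.add_assoc] using h
        exact le_antisymm h2 (hd _)
    refine ⟨1, one_pos, K0 + 1, by omega, ?_⟩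
    intro k hk
    have : d k = 0 := by
      have := hzero (k - K0)
      rwa [Nat.add_sub_cancel' (by omega)] at this
    rw [this, one_mul]
    exact Real.rpow_nonneg (Nat.cast_nonneg k) _
end
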